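/- There exist a constant C > 0 and a natural number N₀ such that for every even natural number N ≥ N₀, every maximizer β̂ of Q^N over the feasible set {β ∈ [0,1/2] : Nβ ∈ ℕ} satisfies |β̂ − β*| ≤ C·(log N)/√N. -/

import Mathlib

open MeasureTheory ProbabilityTheory

/-- The probability mass function of a `Binomial(n, p)` random variable at `k`. -/
noncomputable def binomPMF (n : ℕ) (p : ℝ) (k : ℕ) : ℝ :=
  (n.choose k : ℝ) * p ^ k * (1 - p) ^ (n - k)

/-- `EG p1 q1 p2 q2 N M f = E[f(G(N, β)/N)]` for `β = M/N`, where `G(N, β)` is the sum of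
four independent binomial random variables with parameters `(Nβ, p1)`, `(N/2 − Nβ, q1)`,
`(N/2 − Nβ, p2)`, `(Nβ, q2)`. -/
noncomputable def EG (p1 q1 p2 q2 : ℝ) (N M : ℕ) (f : ℝ → ℝ) : ℝ :=
  ∑ k1 ∈ Finset.range (M + 1), ∑ k2 ∈ Finset.range (N / 2 - M + 1),
    ∑ k3 ∈ Finset.range (N / 2 - M + 1), ∑ k4 ∈ Finset.range (M + 1),
      binomPMF M p1 k1 * binomPMF (N / 2 - M) q1 k2 *
        binomPMF (N / 2 - M) p2 k3 * binomPMF M q2 k4 *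
        f (((k1 + k2 + k3 + k4 : ℕ) : ℝ) / (N : ℝ))

/-- `QN p1 q1 p2 q2 N M = Q^N(β) = β + E[min{1/2, G(N,β)/N}]` for `β = M/N`. -/
noncomputable def QN (p1 q1 p2 q2 : ℝ) (N M : ℕ) : ℝ :=
  (M : ℝ) / (N : ℝ) + EG p1 q1 p2 q2 N M (fun u => min (1 / 2) u)

/-- `VN p1 q1 p2 q2 N = V^N = max{Q^N(β) : β ∈ [0, 1/2], Nβ ∈ ℕ}`. -/
noncomputable def VN (p1 q1 p2 q2 : ℝ) (N : ℕ) : ℝ :=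
  (Finset.range (N / 2 + 1)).sup' ⟨0, Finset.mem_range.mpr (Nat.succ_pos _)⟩
    (fun M => QN p1 q1 p2 q2 N M)

/-! ### Auxiliary lemmas -/

lemma binomPMF_nonneg {p : ℝ} (h0 : 0 ≤ p) (h1 : p ≤ 1) (n k : ℕ) :
    0 ≤ binomPMF n p k := by
  unfold binomPMF
  exact mul_nonneg (mul_nonneg (by positivity) (pow_nonneg h0 _))
    (pow_nonneg (by linarith) _)

lemma binom_sum (n : ℕ) (p : ℝ) : ∑ k ∈ Finset.range (n + 1), binomPMF n p k = 1 := by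
  have h : (p + (1 - p)) ^ n
      = ∑ k ∈ Finset.range (n + 1), p ^ k * (1 - p) ^ (n - k) * (n.choose k : ℝ) :=
    add_pow p (1 - p) n
  have h2 : (p + (1 - p)) ^ n = 1 := by norm_num
  rw [h2] at h
  calc ∑ k ∈ Finset.range (n + 1), binomPMF n p k
      = ∑ k ∈ Finset.range (n + 1), p ^ k * (1 - p) ^ (n - k) * (n.choose k : ℝ) :=
        Finset.sum_congr rfl fun k _ => by unfold binomPMF; ring
    _ = 1 := h.symm

lemma binom_sum_mul (n : ℕ) (p : ℝ) :
    ∑ k ∈ Finset.range (n + 1), (k : ℝ) * binomPMF n p k = (n : ℝ) * p := by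
  cases n with
  | zero => simp [binomPMF]
  | succ m =>
    rw [Finset.sum_range_succ']
    have key : ∀ i : ℕ, ((i + 1 : ℕ) : ℝ) * binomPMF (m + 1) p (i + 1)
        = ((m : ℝ) + 1) * p * binomPMF m p i := by
      intro i
      have hc : (((m + 1).choose (i + 1) : ℕ) : ℝ) * ((i : ℝ) + 1)
          = ((m : ℝ) + 1) * ((m.choose i : ℕ) : ℝ) := by
        have h := Nat.add_one_mul_choose_eq m i
        have h2 : ((m.succ * m.choose i : ℕ) : ℝ) = (((m + 1).choose (i + 1) * (i + 1) : ℕ) : ℝ) := by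
          rw [h]
        push_cast at h2
        linarith
      unfold binomPMF
      rw [Nat.succ_sub_succ]
      push_cast
      linear_combination (p ^ i * p * (1 - p) ^ (m - i)) * hc
    calc (∑ i ∈ Finset.range (m + 1), ((i + 1 : ℕ) : ℝ) * binomPMF (m + 1) p (i + 1))
          + ((0 : ℕ) : ℝ) * binomPMF (m + 1) p 0
        = ∑ i ∈ Finset.range (m + 1), ((m : ℝ) + 1) * p * binomPMF m p i := by
          rw [Finset.sum_congr rfl fun i _ => key i]; push_cast; ring
      _ = ((m : ℝ) + 1) * p * ∑ i ∈ Finset.range (m + 1), binomPMF m p i := by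
          rw [Finset.mul_sum]
      _ = ((m + 1 : ℕ) : ℝ) * p := by rw [binom_sum]; push_cast; ring

lemma binom_sum_sq (n : ℕ) (p : ℝ) :
    ∑ k ∈ Finset.range (n + 1), (k : ℝ) ^ 2 * binomPMF n p k
      = (n : ℝ) * p * (1 - p) + ((n : ℝ) * p) ^ 2 := by
  cases n with
  | zero => simp [binomPMF]
  | succ m =>
    rw [Finset.sum_range_succ']
    have key : ∀ i : ℕ, ((i + 1 : ℕ) : ℝ) ^ 2 * binomPMF (m + 1) p (i + 1)
        = ((m : ℝ) + 1) * p * (((i : ℝ) + 1) * binomPMF m p i) := by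
      intro i
      have hc : (((m + 1).choose (i + 1) : ℕ) : ℝ) * ((i : ℝ) + 1)
          = ((m : ℝ) + 1) * ((m.choose i : ℕ) : ℝ) := by
        have h := Nat.add_one_mul_choose_eq m i
        have h2 : ((m.succ * m.choose i : ℕ) : ℝ) = (((m + 1).choose (i + 1) * (i + 1) : ℕ) : ℝ) := by
          rw [h]
        push_cast at h2
        linarith
      unfold binomPMF
      rw [Nat.succ_sub_succ]
      push_cast
      linear_combination (((i : ℝ) + 1) * p ^ i * p * (1 - p) ^ (m - i)) * hc
    calc (∑ i ∈ Finset.range (m + 1), ((i + 1 : ℕ) : ℝ) ^ 2 * binomPMF (m + 1) p (i + 1))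
          + ((0 : ℕ) : ℝ) ^ 2 * binomPMF (m + 1) p 0
        = ∑ i ∈ Finset.range (m + 1), ((m : ℝ) + 1) * p *
            ((i : ℝ) * binomPMF m p i + binomPMF m p i) := by
          rw [Finset.sum_congr rfl fun i _ => key i]
          push_cast
          rw [Finset.sum_congr rfl (fun i _ => by ring :
            ∀ i ∈ Finset.range (m + 1), ((m : ℝ) + 1) * p * (((i : ℝ) + 1) * binomPMF m p i)
              = ((m : ℝ) + 1) * p * ((i : ℝ) * binomPMF m p i + binomPMF m p i))]
          ring
      _ = ((m : ℝ) + 1) * p * ∑ i ∈ Finset.range (m + 1),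
            ((i : ℝ) * binomPMF m p i + binomPMF m p i) := by rw [Finset.mul_sum]
      _ = ((m : ℝ) + 1) * p * ((m : ℝ) * p + 1) := by
          rw [Finset.sum_add_distrib, binom_sum_mul, binom_sum]
      _ = ((m + 1 : ℕ) : ℝ) * p * (1 - p) + (((m + 1 : ℕ) : ℝ) * p) ^ 2 := by
          push_cast; ring

lemma sum_pmf_quadratic (n : ℕ) (p a b c : ℝ) :
    ∑ k ∈ Finset.range (n + 1), binomPMF n p k * (a * (k : ℝ) ^ 2 + b * (k : ℝ) + c)
      = a * ((n : ℝ) * p * (1 - p) + ((n : ℝ) * p) ^ 2) + b * ((n : ℝ) * p) + c := by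
  have h : ∀ k : ℕ, binomPMF n p k * (a * (k : ℝ) ^ 2 + b * (k : ℝ) + c)
      = a * ((k : ℝ) ^ 2 * binomPMF n p k) + (b * ((k : ℝ) * binomPMF n p k)
        + c * binomPMF n p k) := fun k => by ring
  rw [Finset.sum_congr rfl fun k _ => h k, Finset.sum_add_distrib, Finset.sum_add_distrib,
    ← Finset.mul_sum, ← Finset.mul_sum, ← Finset.mul_sum, binom_sum, binom_sum_mul,
    binom_sum_sq, mul_one]
  ring

lemma sum_pmf_shift (n : ℕ) (p α β γ V s : ℝ) :
    ∑ k ∈ Finset.range (n + 1),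
        binomPMF n p k * (α * (V + (s + (k : ℝ)) ^ 2) + β * (s + (k : ℝ)) + γ)
      = α * ((V + (n : ℝ) * p * (1 - p)) + (s + (n : ℝ) * p) ^ 2)
        + β * (s + (n : ℝ) * p) + γ := by
  rw [Finset.sum_congr rfl (fun k _ => by ring :
    ∀ k ∈ Finset.range (n + 1),
      binomPMF n p k * (α * (V + (s + (k : ℝ)) ^ 2) + β * (s + (k : ℝ)) + γ)
        = binomPMF n p k * (α * (k : ℝ) ^ 2 + (2 * α * s + β) * (k : ℝ)
            + (α * (V + s ^ 2) + β * s + γ))), sum_pmf_quadratic]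
  ring

lemma quad_poly (n1 n2 n3 n4 : ℕ) (r1 r2 r3 r4 α β γ : ℝ) :
    (∑ k1 ∈ Finset.range (n1 + 1), ∑ k2 ∈ Finset.range (n2 + 1),
      ∑ k3 ∈ Finset.range (n3 + 1), ∑ k4 ∈ Finset.range (n4 + 1),
        binomPMF n1 r1 k1 * binomPMF n2 r2 k2 * binomPMF n3 r3 k3 * binomPMF n4 r4 k4 *
          (α * ((k1 + k2 + k3 + k4 : ℕ) : ℝ) ^ 2 + β * ((k1 + k2 + k3 + k4 : ℕ) : ℝ) + γ))
    = α * (((n1 : ℝ) * r1 * (1 - r1) + (n2 : ℝ) * r2 * (1 - r2) + (n3 : ℝ) * r3 * (1 - r3)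
          + (n4 : ℝ) * r4 * (1 - r4))
        + ((n1 : ℝ) * r1 + (n2 : ℝ) * r2 + (n3 : ℝ) * r3 + (n4 : ℝ) * r4) ^ 2)
      + β * ((n1 : ℝ) * r1 + (n2 : ℝ) * r2 + (n3 : ℝ) * r3 + (n4 : ℝ) * r4) + γ := by
  have h4 : ∀ k1 k2 k3 : ℕ,
      ∑ k4 ∈ Finset.range (n4 + 1),
        binomPMF n1 r1 k1 * binomPMF n2 r2 k2 * binomPMF n3 r3 k3 * binomPMF n4 r4 k4 *
          (α * ((k1 + k2 + k3 + k4 : ℕ) : ℝ) ^ 2 + β * ((k1 + k2 + k3 + k4 : ℕ) : ℝ) + γ)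
      = binomPMF n1 r1 k1 * binomPMF n2 r2 k2 * binomPMF n3 r3 k3 *
          (α * ((n4 : ℝ) * r4 * (1 - r4) + (((k1 : ℝ) + (k2 : ℝ) + (k3 : ℝ)) + (n4 : ℝ) * r4) ^ 2)
            + β * (((k1 : ℝ) + (k2 : ℝ) + (k3 : ℝ)) + (n4 : ℝ) * r4) + γ) := by
    intro k1 k2 k3
    have e : ∀ k4 : ℕ,
        binomPMF n1 r1 k1 * binomPMF n2 r2 k2 * binomPMF n3 r3 k3 * binomPMF n4 r4 k4 *
          (α * ((k1 + k2 + k3 + k4 : ℕ) : ℝ) ^ 2 + β * ((k1 + k2 + k3 + k4 : ℕ) : ℝ) + γ)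
        = binomPMF n1 r1 k1 * binomPMF n2 r2 k2 * binomPMF n3 r3 k3 *
            (binomPMF n4 r4 k4 *
              (α * ((0 : ℝ) + (((k1 : ℝ) + (k2 : ℝ) + (k3 : ℝ)) + (k4 : ℝ)) ^ 2)
                + β * (((k1 : ℝ) + (k2 : ℝ) + (k3 : ℝ)) + (k4 : ℝ)) + γ)) := by
      intro k4; push_cast; ring
    simp only [e]
    rw [← Finset.mul_sum, sum_pmf_shift]
    ring
  have h3 : ∀ k1 k2 : ℕ,
      ∑ k3 ∈ Finset.range (n3 + 1),
        binomPMF n1 r1 k1 * binomPMF n2 r2 k2 * binomPMF n3 r3 k3 *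
          (α * ((n4 : ℝ) * r4 * (1 - r4) + (((k1 : ℝ) + (k2 : ℝ) + (k3 : ℝ)) + (n4 : ℝ) * r4) ^ 2)
            + β * (((k1 : ℝ) + (k2 : ℝ) + (k3 : ℝ)) + (n4 : ℝ) * r4) + γ)
      = binomPMF n1 r1 k1 * binomPMF n2 r2 k2 *
          (α * (((n3 : ℝ) * r3 * (1 - r3) + (n4 : ℝ) * r4 * (1 - r4))
              + (((k1 : ℝ) + (k2 : ℝ)) + ((n3 : ℝ) * r3 + (n4 : ℝ) * r4)) ^ 2)
            + β * (((k1 : ℝ) + (k2 : ℝ)) + ((n3 : ℝ) * r3 + (n4 : ℝ) * r4)) + γ) := by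
    intro k1 k2
    have e : ∀ k3 : ℕ,
        binomPMF n1 r1 k1 * binomPMF n2 r2 k2 * binomPMF n3 r3 k3 *
          (α * ((n4 : ℝ) * r4 * (1 - r4) + (((k1 : ℝ) + (k2 : ℝ) + (k3 : ℝ)) + (n4 : ℝ) * r4) ^ 2)
            + β * (((k1 : ℝ) + (k2 : ℝ) + (k3 : ℝ)) + (n4 : ℝ) * r4) + γ)
        = binomPMF n1 r1 k1 * binomPMF n2 r2 k2 *
            (binomPMF n3 r3 k3 *
              (α * ((n4 : ℝ) * r4 * (1 - r4)
                  + ((((k1 : ℝ) + (k2 : ℝ)) + (n4 : ℝ) * r4) + (k3 : ℝ)) ^ 2)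
                + β * ((((k1 : ℝ) + (k2 : ℝ)) + (n4 : ℝ) * r4) + (k3 : ℝ)) + γ)) := by
      intro k3; ring
    simp only [e]
    rw [← Finset.mul_sum, sum_pmf_shift]
    ring
  have h2 : ∀ k1 : ℕ,
      ∑ k2 ∈ Finset.range (n2 + 1),
        binomPMF n1 r1 k1 * binomPMF n2 r2 k2 *
          (α * (((n3 : ℝ) * r3 * (1 - r3) + (n4 : ℝ) * r4 * (1 - r4))
              + (((k1 : ℝ) + (k2 : ℝ)) + ((n3 : ℝ) * r3 + (n4 : ℝ) * r4)) ^ 2)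
            + β * (((k1 : ℝ) + (k2 : ℝ)) + ((n3 : ℝ) * r3 + (n4 : ℝ) * r4)) + γ)
      = binomPMF n1 r1 k1 *
          (α * (((n2 : ℝ) * r2 * (1 - r2) + (n3 : ℝ) * r3 * (1 - r3) + (n4 : ℝ) * r4 * (1 - r4))
              + ((k1 : ℝ) + ((n2 : ℝ) * r2 + (n3 : ℝ) * r3 + (n4 : ℝ) * r4)) ^ 2)
            + β * ((k1 : ℝ) + ((n2 : ℝ) * r2 + (n3 : ℝ) * r3 + (n4 : ℝ) * r4)) + γ) := by
    intro k1
    have e : ∀ k2 : ℕ,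
        binomPMF n1 r1 k1 * binomPMF n2 r2 k2 *
          (α * (((n3 : ℝ) * r3 * (1 - r3) + (n4 : ℝ) * r4 * (1 - r4))
              + (((k1 : ℝ) + (k2 : ℝ)) + ((n3 : ℝ) * r3 + (n4 : ℝ) * r4)) ^ 2)
            + β * (((k1 : ℝ) + (k2 : ℝ)) + ((n3 : ℝ) * r3 + (n4 : ℝ) * r4)) + γ)
        = binomPMF n1 r1 k1 *
            (binomPMF n2 r2 k2 *
              (α * (((n3 : ℝ) * r3 * (1 - r3) + (n4 : ℝ) * r4 * (1 - r4))
                  + (((k1 : ℝ) + ((n3 : ℝ) * r3 + (n4 : ℝ) * r4)) + (k2 : ℝ)) ^ 2)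
                + β * (((k1 : ℝ) + ((n3 : ℝ) * r3 + (n4 : ℝ) * r4)) + (k2 : ℝ)) + γ)) := by
      intro k2; ring
    simp only [e]
    rw [← Finset.mul_sum, sum_pmf_shift]
    ring
  simp only [h4, h3, h2]
  have e : ∀ k1 : ℕ,
      binomPMF n1 r1 k1 *
          (α * (((n2 : ℝ) * r2 * (1 - r2) + (n3 : ℝ) * r3 * (1 - r3) + (n4 : ℝ) * r4 * (1 - r4))
              + ((k1 : ℝ) + ((n2 : ℝ) * r2 + (n3 : ℝ) * r3 + (n4 : ℝ) * r4)) ^ 2)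
            + β * ((k1 : ℝ) + ((n2 : ℝ) * r2 + (n3 : ℝ) * r3 + (n4 : ℝ) * r4)) + γ)
      = binomPMF n1 r1 k1 *
          (α * (((n2 : ℝ) * r2 * (1 - r2) + (n3 : ℝ) * r3 * (1 - r3) + (n4 : ℝ) * r4 * (1 - r4))
              + ((((n2 : ℝ) * r2 + (n3 : ℝ) * r3 + (n4 : ℝ) * r4)) + (k1 : ℝ)) ^ 2)
            + β * ((((n2 : ℝ) * r2 + (n3 : ℝ) * r3 + (n4 : ℝ) * r4)) + (k1 : ℝ)) + γ) := by
    intro k1; ring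
  simp only [e]
  rw [sum_pmf_shift]
  ring

/-- Total mean of the four binomials (divided by nothing). -/
noncomputable def muT (p1 q1 p2 q2 : ℝ) (N M : ℕ) : ℝ :=
  (M : ℝ) * p1 + ((N / 2 - M : ℕ) : ℝ) * q1 + ((N / 2 - M : ℕ) : ℝ) * p2 + (M : ℝ) * q2

/-- Total variance of the four binomials. -/
noncomputable def varT (p1 q1 p2 q2 : ℝ) (N M : ℕ) : ℝ :=
  (M : ℝ) * p1 * (1 - p1) + ((N / 2 - M : ℕ) : ℝ) * q1 * (1 - q1)
    + ((N / 2 - M : ℕ) : ℝ) * p2 * (1 - p2) + (M : ℝ) * q2 * (1 - q2)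

lemma EG_poly (p1 q1 p2 q2 : ℝ) (N M : ℕ) (hN : (N : ℝ) ≠ 0) (a b c : ℝ) :
    EG p1 q1 p2 q2 N M (fun u => a * u ^ 2 + b * u + c)
      = a * (varT p1 q1 p2 q2 N M / (N : ℝ) ^ 2 + (muT p1 q1 p2 q2 N M / (N : ℝ)) ^ 2)
        + b * (muT p1 q1 p2 q2 N M / (N : ℝ)) + c := by
  unfold EG
  have h1 : ∀ k1 k2 k3 k4 : ℕ,
      binomPMF M p1 k1 * binomPMF (N / 2 - M) q1 k2 * binomPMF (N / 2 - M) p2 k3 *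
          binomPMF M q2 k4 *
        (a * (((k1 + k2 + k3 + k4 : ℕ) : ℝ) / (N : ℝ)) ^ 2
          + b * (((k1 + k2 + k3 + k4 : ℕ) : ℝ) / (N : ℝ)) + c)
      = binomPMF M p1 k1 * binomPMF (N / 2 - M) q1 k2 * binomPMF (N / 2 - M) p2 k3 *
          binomPMF M q2 k4 *
        (a / (N : ℝ) ^ 2 * ((k1 + k2 + k3 + k4 : ℕ) : ℝ) ^ 2
          + b / (N : ℝ) * ((k1 + k2 + k3 + k4 : ℕ) : ℝ) + c) := by
    intro k1 k2 k3 k4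
    field_simp
  simp only [h1]
  rw [quad_poly]
  unfold muT varT
  field_simp

lemma EG_mono (p1 q1 p2 q2 : ℝ) (hp1 : p1 ∈ Set.Icc (0 : ℝ) 1) (hq1 : q1 ∈ Set.Icc (0 : ℝ) 1)
    (hp2 : p2 ∈ Set.Icc (0 : ℝ) 1) (hq2 : q2 ∈ Set.Icc (0 : ℝ) 1) (N M : ℕ) (f g : ℝ → ℝ)
    (h : ∀ u, f u ≤ g u) : EG p1 q1 p2 q2 N M f ≤ EG p1 q1 p2 q2 N M g := by
  unfold EG
  refine Finset.sum_le_sum fun k1 _ => Finset.sum_le_sum fun k2 _ =>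
    Finset.sum_le_sum fun k3 _ => Finset.sum_le_sum fun k4 _ => ?_
  exact mul_le_mul_of_nonneg_left (h _)
    (mul_nonneg (mul_nonneg (mul_nonneg (binomPMF_nonneg hp1.1 hp1.2 _ _)
      (binomPMF_nonneg hq1.1 hq1.2 _ _)) (binomPMF_nonneg hp2.1 hp2.2 _ _))
      (binomPMF_nonneg hq2.1 hq2.2 _ _))

set_option maxHeartbeats 4000000 in
/-- Every maximizer `β̂ = M/N` of `Q^N` over the feasible set `{β ∈ [0,1/2] : Nβ ∈ ℕ}`
satisfies `|β̂ − β*| ≤ C·(log N)/√N` for large enough even `N`. -/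
theorem stmt14 (p1 q1 p2 q2 c βstar w : ℝ)
    (hp1 : p1 ∈ Set.Icc (0 : ℝ) 1) (hq1 : q1 ∈ Set.Icc (0 : ℝ) 1)
    (hp2 : p2 ∈ Set.Icc (0 : ℝ) 1) (hq2 : q2 ∈ Set.Icc (0 : ℝ) 1)
    (hc : c = q1 + p2 - p1 - q2) (hc1 : 1 < c)
    (hβ : βstar = (q1 + p2 - 1) / (2 * c))
    (hw2 : w ^ 2 = βstar * (p1 * (1 - p1)) + (1 / 2 - βstar) * (q1 * (1 - q1))
        + (1 / 2 - βstar) * (p2 * (1 - p2)) + βstar * (q2 * (1 - q2)))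
    (hw : 0 < w) :
    ∃ C : ℝ, 0 < C ∧ ∃ N₀ : ℕ,
      ∀ N : ℕ, N₀ ≤ N → Even N →
        ∀ M : ℕ, M ≤ N / 2 →
          (∀ M' : ℕ, M' ≤ N / 2 → QN p1 q1 p2 q2 N M' ≤ QN p1 q1 p2 q2 N M) →
          |(M : ℝ) / (N : ℝ) - βstar| ≤ C * Real.log N / Real.sqrt N := by
  have hc0 : (0 : ℝ) < c := by linarith
  have hc2 : c ≤ 2 := by rw [hc]; linarith [hp1.1, hq2.1, hq1.2, hp2.2]
  have hβpos : 0 < βstar := by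
    rw [hβ]
    apply div_pos
    · linarith [hp1.1, hq2.1]
    · linarith
  have hβhalf : βstar < 1 / 2 := by
    rw [hβ, div_lt_iff₀ (show (0 : ℝ) < 2 * c by linarith)]
    linarith [hq1.2, hp2.2]
  have hcβ : c * βstar = (q1 + p2 - 1) / 2 := by
    rw [hβ]
    field_simp
  refine ⟨4 + 4 / (c - 1), by
    have h : (0 : ℝ) < 4 / (c - 1) := div_pos (by norm_num) (by linarith)
    linarith, 16, fun N hN hNeven M hM hmax => ?_⟩
  have hN0 : (0 : ℝ) < N := by exact_mod_cast Nat.pos_of_ne_zero (by omega)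
  have hNne : (N : ℝ) ≠ 0 := hN0.ne'
  set s := Real.sqrt N with hsdef
  have hss : s * s = (N : ℝ) := Real.mul_self_sqrt hN0.le
  have hs0 : 0 < s := Real.sqrt_pos.mpr hN0
  have hN16 : (16 : ℝ) ≤ (N : ℝ) := by exact_mod_cast hN
  have hs4 : 4 ≤ s := by nlinarith
  have hsN : s ≤ (N : ℝ) := by nlinarith
  have hN2R : ((N / 2 : ℕ) : ℝ) = (N : ℝ) / 2 := by
    have h2 : (N / 2 : ℕ) * 2 = N := Nat.div_mul_cancel hNeven.two_dvd
    have h3 := congrArg (fun x : ℕ => (x : ℝ)) h2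
    push_cast at h3
    linarith
  have hμ : ∀ M' : ℕ, M' ≤ N / 2 → muT p1 q1 p2 q2 N M' / (N : ℝ)
      = 1 / 2 + c * (βstar - (M' : ℝ) / (N : ℝ)) := by
    intro M' hM'
    have hsub : ((N / 2 - M' : ℕ) : ℝ) = (N : ℝ) / 2 - (M' : ℝ) := by
      rw [Nat.cast_sub hM', hN2R]
    unfold muT
    rw [hsub, div_eq_iff hNne]
    have e1 : c * (βstar - (M' : ℝ) / (N : ℝ)) * (N : ℝ) = c * βstar * (N : ℝ) - c * (M' : ℝ) := by
      field_simp
    linear_combination (M' : ℝ) * hc - (N : ℝ) * hcβ - e1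
  -- the floor point
  set Ms := Nat.floor ((N : ℝ) * βstar) with hMsdef
  have hfl : (Ms : ℝ) ≤ (N : ℝ) * βstar := Nat.floor_le (by positivity)
  have hfl2 : (N : ℝ) * βstar < (Ms : ℝ) + 1 := Nat.lt_floor_add_one _
  have hMsN2 : Ms ≤ N / 2 := by
    have h1 : (Ms : ℝ) < ((N / 2 : ℕ) : ℝ) := by
      rw [hN2R]; nlinarith
    exact (Nat.cast_lt.mp h1).le
  have hdev0 : 0 ≤ βstar - (Ms : ℝ) / (N : ℝ) := by
    rw [sub_nonneg, div_le_iff₀ hN0]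
    linarith
  have hdev1 : (βstar - (Ms : ℝ) / (N : ℝ)) * (N : ℝ) ≤ 1 := by
    have hq : (Ms : ℝ) / (N : ℝ) * (N : ℝ) = (Ms : ℝ) := div_mul_cancel₀ _ hNne
    nlinarith
  -- upper bounds
  have hHalfUB : ∀ M' : ℕ, QN p1 q1 p2 q2 N M' ≤ (M' : ℝ) / (N : ℝ) + 1 / 2 := by
    intro M'
    unfold QN
    have hle := EG_mono p1 q1 p2 q2 hp1 hq1 hp2 hq2 N M' (fun u => min (1 / 2) u)
      (fun u => 0 * u ^ 2 + 0 * u + 1 / 2) (fun u => by simpa using min_le_left (1 / 2 : ℝ) u)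
    rw [EG_poly p1 q1 p2 q2 N M' hNne 0 0 (1 / 2)] at hle
    linarith
  have hMainUB : ∀ M' : ℕ, M' ≤ N / 2 → QN p1 q1 p2 q2 N M'
      ≤ (M' : ℝ) / (N : ℝ) + (1 / 2 + c * (βstar - (M' : ℝ) / (N : ℝ))) := by
    intro M' hM'
    unfold QN
    have hle := EG_mono p1 q1 p2 q2 hp1 hq1 hp2 hq2 N M' (fun u => min (1 / 2) u)
      (fun u => 0 * u ^ 2 + 1 * u + 0) (fun u => by simpa using min_le_right (1 / 2 : ℝ) u)
    rw [EG_poly p1 q1 p2 q2 N M' hNne 0 1 0] at hle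
    have hm := hμ M' hM'
    linarith
  -- lower bound at Ms
  have hq14 : ∀ p : ℝ, p * (1 - p) ≤ 1 / 4 := fun p => by nlinarith [sq_nonneg (p - 1 / 2)]
  have hsubMs : ((N / 2 - Ms : ℕ) : ℝ) = (N : ℝ) / 2 - (Ms : ℝ) := by
    rw [Nat.cast_sub hMsN2, hN2R]
  have hVle : varT p1 q1 p2 q2 N Ms ≤ (N : ℝ) / 4 := by
    unfold varT
    rw [hsubMs]
    have c1 : (0 : ℝ) ≤ (Ms : ℝ) := Nat.cast_nonneg _
    have c2 : (0 : ℝ) ≤ (N : ℝ) / 2 - (Ms : ℝ) := by rw [← hsubMs]; exact Nat.cast_nonneg _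
    have t1 : (Ms : ℝ) * (p1 * (1 - p1)) ≤ (Ms : ℝ) * (1 / 4) :=
      mul_le_mul_of_nonneg_left (hq14 p1) c1
    have t2 : ((N : ℝ) / 2 - (Ms : ℝ)) * (q1 * (1 - q1)) ≤ ((N : ℝ) / 2 - (Ms : ℝ)) * (1 / 4) :=
      mul_le_mul_of_nonneg_left (hq14 q1) c2
    have t3 : ((N : ℝ) / 2 - (Ms : ℝ)) * (p2 * (1 - p2)) ≤ ((N : ℝ) / 2 - (Ms : ℝ)) * (1 / 4) :=
      mul_le_mul_of_nonneg_left (hq14 p2) c2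
    have t4 : (Ms : ℝ) * (q2 * (1 - q2)) ≤ (Ms : ℝ) * (1 / 4) :=
      mul_le_mul_of_nonneg_left (hq14 q2) c1
    nlinarith
  have hmLB := hμ Ms hMsN2
  have hφle : ∀ u : ℝ, -(s / 4) * u ^ 2 + s / 4 * u + (-(s / 16) + 1 / 2 - 1 / s)
      ≤ min (1 / 2 : ℝ) u := by
    intro u
    refine le_min ?_ ?_
    · nlinarith [mul_nonneg hs0.le (sq_nonneg (u - 1 / 2)), one_div_pos.mpr hs0]
    · have h2 : -(s / 4) * u ^ 2 + s / 4 * u + (-(s / 16) + 1 / 2 - 1 / s) - u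
          = -(s / 4) * (u - 1 / 2 + 2 / s) ^ 2 := by
        field_simp
        ring
      nlinarith [mul_nonneg hs0.le (sq_nonneg (u - 1 / 2 + 2 / s))]
  have hEGφ := EG_poly p1 q1 p2 q2 N Ms hNne (-(s / 4)) (s / 4) (-(s / 16) + 1 / 2 - 1 / s)
  have hmono := EG_mono p1 q1 p2 q2 hp1 hq1 hp2 hq2 N Ms
    (fun u => -(s / 4) * u ^ 2 + s / 4 * u + (-(s / 16) + 1 / 2 - 1 / s))
    (fun u => min (1 / 2) u) hφle
  rw [hEGφ] at hmono
  set d := c * (βstar - (Ms : ℝ) / (N : ℝ)) with hd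
  have hd0 : 0 ≤ d := mul_nonneg hc0.le hdev0
  have hdN : d * (N : ℝ) ≤ 2 := by
    have h7 : c * ((βstar - (Ms : ℝ) / (N : ℝ)) * (N : ℝ)) ≤ c * 1 :=
      mul_le_mul_of_nonneg_left hdev1 hc0.le
    rw [hd]
    linarith only [h7, hc2]
  have hd2 : d ^ 2 ≤ 4 / (N : ℝ) ^ 2 := by
    rw [le_div_iff₀ (by positivity)]
    nlinarith only [hdN, mul_nonneg hd0 hN0.le]
  have hVN2 : varT p1 q1 p2 q2 N Ms / (N : ℝ) ^ 2 ≤ 1 / (4 * (N : ℝ)) := by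
    rw [div_le_div_iff₀ (by positivity) (by positivity)]
    nlinarith only [hVle, hN0]
  have hkey : s / 4 * (varT p1 q1 p2 q2 N Ms / (N : ℝ) ^ 2 + d ^ 2) ≤ 2 / s := by
    have hexp : s / 4 * (1 / (4 * (N : ℝ)) + 4 / (N : ℝ) ^ 2) = 1 / (16 * s) + s / (N : ℝ) ^ 2 := by
      rw [← hss]
      field_simp
      ring
    have hb1 : 1 / (16 * s) ≤ 1 / s := by
      apply one_div_le_one_div_of_le hs0
      linarith only [hs0]
    have hb2 : s / (N : ℝ) ^ 2 ≤ 1 / s := by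
      rw [div_le_div_iff₀ (by positivity) hs0]
      nlinarith only [hss, hN16, hN0]
    calc s / 4 * (varT p1 q1 p2 q2 N Ms / (N : ℝ) ^ 2 + d ^ 2)
        ≤ s / 4 * (1 / (4 * (N : ℝ)) + 4 / (N : ℝ) ^ 2) :=
          mul_le_mul_of_nonneg_left (by linarith only [hVN2, hd2]) (by positivity)
      _ = 1 / (16 * s) + s / (N : ℝ) ^ 2 := hexp
      _ ≤ 2 / s := by
          have h8 : (2 : ℝ) / s = 1 / s + 1 / s := by ring
          linarith only [hb1, hb2, h8]
  have hLB : (Ms : ℝ) / (N : ℝ) + 1 / 2 - 3 / s ≤ QN p1 q1 p2 q2 N Ms := by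
    unfold QN
    have hval : -(s / 4) * (varT p1 q1 p2 q2 N Ms / (N : ℝ) ^ 2
          + (muT p1 q1 p2 q2 N Ms / (N : ℝ)) ^ 2)
        + s / 4 * (muT p1 q1 p2 q2 N Ms / (N : ℝ)) + (-(s / 16) + 1 / 2 - 1 / s)
        = -(s / 4) * (varT p1 q1 p2 q2 N Ms / (N : ℝ) ^ 2 + d ^ 2) + 1 / 2 - 1 / s := by
      rw [hmLB]
      ring
    have h3s : (3 : ℝ) / s = 1 / s + 2 / s := by ring
    linarith only [hmono, hval, hkey, h3s]
  -- combine
  have hOpt := hmax Ms hMsN2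
  have hU1 := hHalfUB M
  have hU2 := hMainUB M hM
  have hNinv : 1 / (N : ℝ) * (N : ℝ) = 1 := by field_simp
  have hMsLow : βstar - 1 / (N : ℝ) ≤ (Ms : ℝ) / (N : ℝ) := by
    rw [le_div_iff₀ hN0]
    linarith only [hfl2, hNinv]
  have h1N : 1 / (N : ℝ) ≤ 1 / s := one_div_le_one_div_of_le hs0 hsN
  have hchain : βstar + 1 / 2 - 4 / s ≤ QN p1 q1 p2 q2 N M := by
    have h4s : (4 : ℝ) / s = 1 / s + 3 / s := by ring
    linarith only [hLB, hOpt, hMsLow, h1N, h4s]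
  have hxlow : -(4 / s) ≤ (M : ℝ) / (N : ℝ) - βstar := by linarith only [hU1, hchain]
  have hxhigh : (M : ℝ) / (N : ℝ) - βstar ≤ 4 / ((c - 1) * s) := by
    have h5 : (c - 1) * ((M : ℝ) / (N : ℝ) - βstar) ≤ 4 / s := by linarith only [hU2, hchain]
    rw [le_div_iff₀ (mul_pos (by linarith only [hc1] : (0:ℝ) < c - 1) hs0)]
    have h6 : 4 / s * s = 4 := div_mul_cancel₀ _ hs0.ne'
    nlinarith only [h5, hs0, h6]
  have habs : |(M : ℝ) / (N : ℝ) - βstar| ≤ (4 + 4 / (c - 1)) / s := by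
    rw [abs_le]
    have hfrac : (0 : ℝ) ≤ 4 / (c - 1) :=
      le_of_lt (div_pos (by norm_num) (by linarith only [hc1]))
    constructor
    · have h9 : 4 / s ≤ (4 + 4 / (c - 1)) / s := by
        rw [div_le_div_iff_of_pos_right hs0]
        linarith only [hfrac]
      linarith only [hxlow, h9]
    · calc (M : ℝ) / (N : ℝ) - βstar ≤ 4 / ((c - 1) * s) := hxhigh
        _ = (4 / (c - 1)) / s := by rw [div_mul_eq_div_div]
        _ ≤ (4 + 4 / (c - 1)) / s := by
            rw [div_le_div_iff_of_pos_right hs0]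
            linarith only []
  have hlog : 1 ≤ Real.log N := by
    rw [Real.le_log_iff_exp_le hN0]
    have h9 := Real.exp_one_lt_d9
    linarith only [h9, hN16]
  calc |(M : ℝ) / (N : ℝ) - βstar| ≤ (4 + 4 / (c - 1)) / s := habs
    _ ≤ (4 + 4 / (c - 1)) * Real.log N / s := by
        rw [div_le_div_iff₀ hs0 hs0]
        have hC : (0 : ℝ) < 4 + 4 / (c - 1) := by
          have h10 : (0 : ℝ) < 4 / (c - 1) := div_pos (by norm_num) (by linarith only [hc1])
          linarith only [h10]
        nlinarith only [hlog, mul_pos hC hs0, hs0, hC]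
    _ = (4 + 4 / (c - 1)) * Real.log N / Real.sqrt N := by rw [hsdef]
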